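/- arXiv:2112.14181 — 3 statements merged into one kernel-verified Lean document; each statement's English description precedes it below -/
import Mathlib

section
/- (Abstract nondegenerate pairing, injectivity of the dual map) In the setting of direct/inverse systems {V_i}, {W_i} with compatible bilinear forms B_i whose canonical maps are isomorphisms, and the induced pairing B on the limits: if v ∈ colim V_i satisfies B(v, w) = 0 for all w ∈ lim W_i, then v = 0. Equivalently, the canonical map colim V_i → Hom(lim W_i, 𝕂) is injective. -/
/-! A vector of `colim V` is detected by functionals `φ`. Each restriction `φ ∘ αc j` is
represented, through the isomorphism `W j ≃ Hom(V j, 𝕂)`, by a unique `w j`; uniqueness and the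
compatibility of the forms make `(w j)` a thread of the inverse system, which lifts to `ω ∈ lim W`
with `Bc(·, ω) = φ`. -/

namespace LimitPairing

variable {𝕂 : Type*} [Field 𝕂] {ι : Type*} [Preorder ι]
  {V W : ι → Type*} [∀ i, AddCommGroup (V i)] [∀ i, Module 𝕂 (V i)]
  [∀ i, AddCommGroup (W i)] [∀ i, Module 𝕂 (W i)]
  {α : ∀ i j, i ≤ j → V i →ₗ[𝕂] V j} {β : ∀ i j, i ≤ j → W j →ₗ[𝕂] W i}
  {B : ∀ i, V i →ₗ[𝕂] W i →ₗ[𝕂] 𝕂}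
  {Vc Wc : Type*} [AddCommGroup Vc] [Module 𝕂 Vc] [AddCommGroup Wc] [Module 𝕂 Wc]
  {αc : ∀ i, V i →ₗ[𝕂] Vc} {βc : ∀ i, Wc →ₗ[𝕂] W i} {Bc : Vc →ₗ[𝕂] Wc →ₗ[𝕂] 𝕂}

theorem bonding_apply_eq_of_flip_eq (φ : Module.Dual 𝕂 Vc)
    (hα : ∀ i j (h : i ≤ j) (v : V i), αc j (α i j h v) = αc i v)
    (hcompat : ∀ i j (h : i ≤ j) (v : V i) (w : W j),
      B j (α i j h v) w = B i v (β i j h w))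
    {i j : ι} (h : i ≤ j) (hinj : Function.Injective (B i).flip) {wi : W i} {wj : W j}
    (hwi : (B i).flip wi = φ ∘ₗ αc i) (hwj : (B j).flip wj = φ ∘ₗ αc j) :
    β i j h wj = wi := by
  refine hinj (LinearMap.ext fun x => ?_)
  calc B i x (β i j h wj) = B j (α i j h x) wj := (hcompat i j h x wj).symm
    _ = φ (αc i x) := by simpa [hα] using LinearMap.congr_fun hwj (α i j h x)
    _ = B i x wi := by simpa using (LinearMap.congr_fun hwi x).symm

theorem flip_surjective
    (hα : ∀ i j (h : i ≤ j) (v : V i), αc j (α i j h v) = αc i v)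
    (hVexh : ∀ v : Vc, ∃ i, ∃ vi : V i, αc i vi = v)
    (hWlim : ∀ w : ∀ i, W i, (∀ i j (h : i ≤ j), β i j h (w j) = w i) →
      ∃ ω : Wc, ∀ i, βc i ω = w i)
    (hcompat : ∀ i j (h : i ≤ j) (v : V i) (w : W j),
      B j (α i j h v) w = B i v (β i j h w))
    (hBc : ∀ i (v : V i) (w : Wc), Bc (αc i v) w = B i v (βc i w))
    (hiso : ∀ i, Function.Bijective ⇑(B i).flip) :
    Function.Surjective Bc.flip := by
  intro φ
  choose w hw using fun j => (hiso j).surjective (φ ∘ₗ αc j)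
  obtain ⟨ω, hω⟩ := hWlim w fun i j h =>
    bonding_apply_eq_of_flip_eq φ hα hcompat h (hiso i).injective (hw i) (hw j)
  refine ⟨ω, LinearMap.ext fun v => ?_⟩
  obtain ⟨i, vi, rfl⟩ := hVexh v
  simpa [hBc, hω] using LinearMap.congr_fun (hw i) vi

end LimitPairing

theorem limit_pairing_dual_injective_general {𝕂 : Type*} [Field 𝕂]
    {ι : Type*} [Preorder ι]
    (V W : ι → Type*) [∀ i, AddCommGroup (V i)] [∀ i, Module 𝕂 (V i)]
    [∀ i, AddCommGroup (W i)] [∀ i, Module 𝕂 (W i)]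
    (α : ∀ i j, i ≤ j → V i →ₗ[𝕂] V j) (β : ∀ i j, i ≤ j → W j →ₗ[𝕂] W i)
    (B : ∀ i, V i →ₗ[𝕂] W i →ₗ[𝕂] 𝕂)
    (Vc Wc : Type*) [AddCommGroup Vc] [Module 𝕂 Vc] [AddCommGroup Wc] [Module 𝕂 Wc]
    (αc : ∀ i, V i →ₗ[𝕂] Vc) (βc : ∀ i, Wc →ₗ[𝕂] W i)
    (Bc : Vc →ₗ[𝕂] Wc →ₗ[𝕂] 𝕂)
    -- compatibility of the bonding maps with the canonical maps to/from the limits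
    (hα : ∀ i j (h : i ≤ j) (v : V i), αc j (α i j h v) = αc i v)
    -- every element of the colimit comes from some stage
    (hVexh : ∀ v : Vc, ∃ i, ∃ vi : V i, αc i vi = v)
    -- every compatible thread in the inverse system comes from the limit
    (hWlim : ∀ w : ∀ i, W i, (∀ i j (h : i ≤ j), β i j h (w j) = w i) →
      ∃ ω : Wc, ∀ i, βc i ω = w i)
    -- compatibility of the bilinear forms with the bonding maps
    (hcompat : ∀ i j (h : i ≤ j) (v : V i) (w : W j),
      B j (α i j h v) w = B i v (β i j h w))
    -- `Bc` is induced by the `B i`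
    (hBc : ∀ i (v : V i) (w : Wc), Bc (αc i v) w = B i v (βc i w))
    -- each canonical map `W i → Hom(V i, 𝕂)` is an isomorphism
    (hiso : ∀ i, Function.Bijective ⇑(B i).flip) :
    ∀ v : Vc, (∀ w : Wc, Bc v w = 0) → v = 0 := by
  intro v hv
  rw [← Module.forall_dual_apply_eq_zero_iff 𝕂]
  intro φ
  obtain ⟨ω, rfl⟩ := LimitPairing.flip_surjective hα hVexh hWlim hcompat hBc hiso φ
  exact hv ω

/-- Abstract nondegenerate pairing in the limit (injectivity of the dual map).
`V` is a direct system and `W` an inverse system of `𝕂`-vector spaces over a common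
directed index set, with compatible bilinear forms `B i` whose canonical maps
`W i → Hom(V i, 𝕂)` are isomorphisms.  `Vc` plays the role of `colim V`,
`Wc` of `lim W`, and `Bc` of the induced pairing on the limits.
Conclusion: the canonical map `colim V → Hom(lim W, 𝕂)` is injective. -/
theorem limit_pairing_dual_injective {𝕂 : Type*} [Field 𝕂]
    {ι : Type*} [Preorder ι] [IsDirected ι (· ≤ ·)]
    (V W : ι → Type*) [∀ i, AddCommGroup (V i)] [∀ i, Module 𝕂 (V i)]
    [∀ i, AddCommGroup (W i)] [∀ i, Module 𝕂 (W i)]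
    (α : ∀ i j, i ≤ j → V i →ₗ[𝕂] V j) (β : ∀ i j, i ≤ j → W j →ₗ[𝕂] W i)
    (B : ∀ i, V i →ₗ[𝕂] W i →ₗ[𝕂] 𝕂)
    (Vc Wc : Type*) [AddCommGroup Vc] [Module 𝕂 Vc] [AddCommGroup Wc] [Module 𝕂 Wc]
    (αc : ∀ i, V i →ₗ[𝕂] Vc) (βc : ∀ i, Wc →ₗ[𝕂] W i)
    (Bc : Vc →ₗ[𝕂] Wc →ₗ[𝕂] 𝕂)
    -- compatibility of the bonding maps with the canonical maps to/from the limits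
    (hα : ∀ i j (h : i ≤ j) (v : V i), αc j (α i j h v) = αc i v)
    (hβ : ∀ i j (h : i ≤ j) (w : Wc), β i j h (βc j w) = βc i w)
    -- every element of the colimit comes from some stage
    (hVexh : ∀ v : Vc, ∃ i, ∃ vi : V i, αc i vi = v)
    -- every compatible thread in the inverse system comes from the limit
    (hWlim : ∀ w : ∀ i, W i, (∀ i j (h : i ≤ j), β i j h (w j) = w i) →
      ∃ ω : Wc, ∀ i, βc i ω = w i)
    -- compatibility of the bilinear forms with the bonding maps
    (hcompat : ∀ i j (h : i ≤ j) (v : V i) (w : W j),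
      B j (α i j h v) w = B i v (β i j h w))
    -- `Bc` is induced by the `B i`
    (hBc : ∀ i (v : V i) (w : Wc), Bc (αc i v) w = B i v (βc i w))
    -- each canonical map `W i → Hom(V i, 𝕂)` is an isomorphism
    (hiso : ∀ i, Function.Bijective ⇑(B i).flip) :
    ∀ v : Vc, (∀ w : Wc, Bc v w = 0) → v = 0 :=
  limit_pairing_dual_injective_general V W α β B Vc Wc αc βc Bc hα hVexh hWlim hcompat hBc hiso
end

section
/- (Reduction of eigenvalues to rational subspaces) Let E be a vector space over ℚ, g : E → E a ℚ-linear endomorphism, and suppose the induced ℂ-linear endomorphism ĝ on E ⊗_ℚ ℂ has an eigenvalue λ ∈ ℂ. Then λ is algebraic over ℚ, and there exists a nonzero vector w ∈ E and a finite-dimensional g-invariant subspace containing w such that the minimal polynomial of w under g equals the minimal polynomial P_λ of λ over ℚ (i.e. P_λ(g)(w) = 0 and no proper divisor of P_λ annihilates w). -/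
/-!
Write an eigenvector as `v = ∑ bᵢ ⊗ cᵢ` in a `ℚ`-basis `(bᵢ)` of `ℂ`. Since `ĝ` acts on the
coefficients `cᵢ` through `g`, and `Q(ĝ) v = Q(λ) v`, a rational polynomial `Q` vanishes at `λ`
exactly when `Q(g)` kills every `cᵢ`. The span `F` of the `cᵢ` is finite-dimensional, and it is
`g`-invariant because the coefficients of `ĝ v = λ v` again lie in `F`. The characteristic
polynomial of `g` on `F` then shows that `λ` is algebraic, `P_λ(g)` kills every `cᵢ`, and for a
nonzero `cⱼ` the irreducibility of `P_λ` makes it the minimal polynomial of `cⱼ`.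
-/

open Polynomial TensorProduct

theorem Irreducible.dvd_of_aeval_apply_eq_zero {K M : Type*} [Field K] [AddCommGroup M]
    [Module K M] {f : Module.End K M} {w : M} {P Q : K[X]} (hP : Irreducible P) (hw : w ≠ 0)
    (hPw : aeval f P w = 0) (hQw : aeval f Q w = 0) : P ∣ Q := by
  by_contra hPQ
  obtain ⟨a, b, hab⟩ := hP.coprime_iff_not_dvd.mpr hPQ
  apply hw
  calc w = aeval f (a * P + b * Q) w := by rw [hab, map_one, Module.End.one_apply]
    _ = 0 := by simp [Module.End.mul_apply, hPw, hQw]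

theorem Module.End.aeval_restrict_apply {R M : Type*} [CommSemiring R] [AddCommMonoid M]
    [Module R M] {f : Module.End R M} {F : Submodule R M} (hF : ∀ x ∈ F, f x ∈ F) (p : R[X])
    (x : F) :
    (aeval (f.restrict hF) p x : M) = aeval f p x := by
  induction p using Polynomial.induction_on' with
  | add p q hp hq => simp [hp, hq]
  | monomial n a =>
    simp only [aeval_monomial, Module.End.mul_apply, Module.algebraMap_end_apply,
      Submodule.coe_smul]
    rw [Module.End.pow_restrict]
    rfl

theorem Module.End.aeval_charpoly_restrict_apply_eq_zero {R M : Type*} [CommRing R]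
    [AddCommGroup M] [Module R M] {f : Module.End R M} {F : Submodule R M} [Module.Free R F]
    [Module.Finite R F] (hF : ∀ x ∈ F, f x ∈ F) {x : M} (hx : x ∈ F) :
    aeval f (f.restrict hF).charpoly x = 0 := by
  rw [← Module.End.aeval_restrict_apply hF _ ⟨x, hx⟩, LinearMap.aeval_self_charpoly]
  rfl

theorem Module.End.aeval_baseChange {R A M : Type*} [CommSemiring R] [CommSemiring A]
    [Algebra R A] [AddCommMonoid M] [Module R M] (f : Module.End R M) (p : R[X]) :
    aeval (f.baseChange A) p = (aeval f p).baseChange A :=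
  aeval_algHom_apply (Module.End.baseChangeHom R A M) f p

namespace TensorProduct

section CommSemiring

variable {K L E E' ι : Type*} [CommSemiring K] [CommSemiring L] [Algebra K L]
  [AddCommMonoid E] [Module K E] [AddCommMonoid E'] [Module K E'] [DecidableEq ι]
  (b : Module.Basis ι K L)

theorem equivFinsuppOfBasisLeft_baseChange_apply (f : E →ₗ[K] E') (u : L ⊗[K] E) (i : ι) :
    equivFinsuppOfBasisLeft b (f.baseChange L u) i = f (equivFinsuppOfBasisLeft b u i) := by
  induction u using TensorProduct.induction_on with
  | zero => simp
  | tmul c x => simp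
  | add x y hx hy => simp [hx, hy]

theorem mem_range_baseChange_subtype_iff (F : Submodule K E) (u : L ⊗[K] E) :
    u ∈ LinearMap.range (F.subtype.baseChange L) ↔ ∀ i, equivFinsuppOfBasisLeft b u i ∈ F := by
  constructor
  · rintro ⟨w, rfl⟩ i
    rw [equivFinsuppOfBasisLeft_baseChange_apply]
    exact (equivFinsuppOfBasisLeft b w i).2
  · intro hu
    rw [← (equivFinsuppOfBasisLeft b).symm_apply_apply u, equivFinsuppOfBasisLeft_symm_apply]
    exact Submodule.finsuppSum_mem _ _ _ _ fun i _ => ⟨b i ⊗ₜ ⟨_, hu i⟩, rfl⟩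

def coeffSpan (v : L ⊗[K] E) : Submodule K E :=
  Submodule.span K (Set.range (equivFinsuppOfBasisLeft b v))

instance (v : L ⊗[K] E) : Module.Finite K (coeffSpan b v) :=
  Module.Finite.span_of_finite K (Finsupp.finite_range _)

theorem coeff_mem_coeffSpan (v : L ⊗[K] E) (i : ι) :
    equivFinsuppOfBasisLeft b v i ∈ coeffSpan b v :=
  Submodule.subset_span ⟨i, rfl⟩

theorem coeffSpan_invariant {g : Module.End K E} {lam : L} {v : L ⊗[K] E}
    (hv : g.baseChange L v = lam • v) : ∀ x ∈ coeffSpan b v, g x ∈ coeffSpan b v := by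
  have hlamv : lam • v ∈ LinearMap.range ((coeffSpan b v).subtype.baseChange L) :=
    Submodule.smul_mem _ _ ((mem_range_baseChange_subtype_iff b _ v).2 (coeff_mem_coeffSpan b v))
  have hg : ∀ i, g (equivFinsuppOfBasisLeft b v i) ∈ coeffSpan b v := by
    rw [← hv, mem_range_baseChange_subtype_iff b] at hlamv
    simpa [equivFinsuppOfBasisLeft_baseChange_apply] using hlamv
  have hle : coeffSpan b v ≤ (coeffSpan b v).comap g :=
    Submodule.span_le.2 (Set.range_subset_iff.2 hg)
  exact fun x hx => hle hx

end CommSemiring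

section Field

variable {K L E ι : Type*} [Field K] [Field L] [Algebra K L]
  [AddCommGroup E] [Module K E] [DecidableEq ι]
  (b : Module.Basis ι K L)

theorem aeval_eq_zero_iff_forall_aeval_coeff_eq_zero {g : Module.End K E} {lam : L}
    {v : L ⊗[K] E} (hv : Module.End.HasEigenvector (g.baseChange L) lam v) (p : K[X]) :
    aeval lam p = 0 ↔ ∀ i, aeval g p (equivFinsuppOfBasisLeft b v i) = 0 := by
  have hpv : (aeval g p).baseChange L v = aeval lam p • v := by
    rw [← Module.End.aeval_baseChange, ← aeval_map_algebraMap L,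
      Module.End.aeval_apply_of_hasEigenvector hv, eval_map_algebraMap]
  rw [← smul_eq_zero_iff_left hv.2, ← hpv, ← (equivFinsuppOfBasisLeft b).map_eq_zero_iff,
    Finsupp.ext_iff]
  simp [equivFinsuppOfBasisLeft_baseChange_apply]

end Field

end TensorProduct

/-- Reduction of eigenvalues to rational subspaces: if the complexification
`ĝ = g ⊗ id` of a `ℚ`-linear endomorphism `g` of a `ℚ`-vector space `E` has an
eigenvalue `λ ∈ ℂ`, then `λ` is algebraic over `ℚ` and there is a nonzero `w ∈ E`,
lying in a finite-dimensional `g`-invariant subspace, whose minimal polynomial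
under `g` is exactly the minimal polynomial `P_λ` of `λ` over `ℚ`
(i.e. `P_λ(g) w = 0` and every `Q` with `Q(g) w = 0` is divisible by `P_λ`). -/
theorem eigenvalue_reduction_to_rational {E : Type*} [AddCommGroup E] [Module ℚ E]
    (g : E →ₗ[ℚ] E) (lam : ℂ)
    (h : Module.End.HasEigenvalue (LinearMap.baseChange ℂ g) lam) :
    IsAlgebraic ℚ lam ∧
    ∃ w : E, w ≠ 0 ∧
      (∃ F : Submodule ℚ E, FiniteDimensional ℚ F ∧ w ∈ F ∧ F.map g ≤ F) ∧
      (aeval (g : Module.End ℚ E) (minpoly ℚ lam)) w = 0 ∧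
      ∀ Q : ℚ[X], (aeval (g : Module.End ℚ E) Q) w = 0 → minpoly ℚ lam ∣ Q := by
  classical
  obtain ⟨v, hv⟩ := h.exists_hasEigenvector
  let b := Module.Basis.ofVectorSpace ℚ ℂ
  set c := equivFinsuppOfBasisLeft b v
  have hF : ∀ x ∈ coeffSpan b v, g x ∈ coeffSpan b v := coeffSpan_invariant b hv.apply_eq_smul
  have hc : ∀ p : ℚ[X], aeval lam p = 0 ↔ ∀ i, aeval g p (c i) = 0 :=
    aeval_eq_zero_iff_forall_aeval_coeff_eq_zero b hv
  have halg : IsAlgebraic ℚ lam :=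
    ⟨_, (LinearMap.charpoly_monic (g.restrict hF)).ne_zero, (hc _).2 fun i =>
      Module.End.aeval_charpoly_restrict_apply_eq_zero hF (coeff_mem_coeffSpan b v i)⟩
  have hminpoly : ∀ i, aeval g (minpoly ℚ lam) (c i) = 0 := (hc _).1 (minpoly.aeval ℚ lam)
  obtain ⟨j, hj⟩ : ∃ j, c j ≠ 0 := by
    by_contra! hc0
    exact hv.2 ((equivFinsuppOfBasisLeft b).map_eq_zero_iff.1 (Finsupp.ext hc0))
  refine ⟨halg, c j, hj, ⟨coeffSpan b v, inferInstance, coeff_mem_coeffSpan b v j,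
    Submodule.map_le_iff_le_comap.2 hF⟩, hminpoly j, fun Q hQ => ?_⟩
  exact (minpoly.irreducible halg.isIntegral).dvd_of_aeval_apply_eq_zero hj (hminpoly j) hQ
end

section
/- (Construction of an eigenvector with algebraic coefficients) Let E be a ℚ-vector space, g : E → E ℚ-linear, and w ∈ E a nonzero vector whose minimal polynomial under g is P(t) = (t−λ₁)⋯(t−λ_d) ∈ ℚ[t], irreducible over ℚ, with complex roots λ₁ = λ, λ₂, …, λ_d. Then z := (ĝ − λ₂)⋯(ĝ − λ_d)(w ⊗ 1) ∈ E ⊗_ℚ ℂ is a nonzero eigenvector of ĝ with eigenvalue λ, and z = Σ_{j=0}^{d−1} μ_j (g^{d−1−j} w ⊗ 1) where each μ_j ∈ ℂ is an algebraic number and μ₀ = 1. -/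
open Polynomial
open scoped TensorProduct

/-!
As `P` is the minimal polynomial of `w`, no nonzero polynomial of degree `< deg P` kills `w`, so
`w, g w, …, g^d w` are linearly independent, and they stay so in `ℂ ⊗ E` because `ℂ` is flat
over `ℚ`. The vector `z = Q(ĝ)(1 ⊗ w)`, with `Q = ∏_{j ≠ 0} (X - λ_j)` monic of degree `d`, has
coefficient `1` on `1 ⊗ g^d w`, hence is nonzero, and `(ĝ - λ₀) z = P(ĝ)(1 ⊗ w) = 1 ⊗ P(g) w = 0`.
The coefficients of `Q` are integral over `ℚ` since `Q` is a monic factor of the monic `P`.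
-/

section

variable {R M : Type*} [CommRing R] [IsDomain R] [AddCommGroup M] [Module R M]

theorem linearIndependent_pow_apply_of_forall_dvd {f : Module.End R M} {v : M} {P : R[X]}
    (hP : ∀ Q : R[X], aeval f Q v = 0 → P ∣ Q) :
    LinearIndependent R fun i : Fin P.natDegree => (f ^ (i : ℕ)) v := by
  refine Fintype.linearIndependent_iff.2 fun c hc i => ?_
  set Q : R[X] := ∑ i : Fin P.natDegree, C (c i) * X ^ (i : ℕ)
  have hQv : aeval f Q v = 0 := by
    simpa [Q, LinearMap.sum_apply, Module.End.mul_apply, Module.algebraMap_end_apply] using hc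
  have hQ : Q = 0 := by
    by_contra hQ
    have hlt : Q.natDegree < P.natDegree :=
      (natDegree_lt_iff_degree_lt hQ).2 (degree_sum_fin_lt c)
    exact (natDegree_le_of_dvd (hP Q hQv) hQ).not_gt hlt
  simpa [Q, finsetSum_coeff, coeff_C_mul, coeff_X_pow, Fin.val_eq_val] using
    congr_arg (coeff · i) hQ

end

section

variable {R A M : Type*} [CommRing R] [CommRing A] [Algebra R A] [AddCommGroup M] [Module R M]

theorem aeval_baseChange_map_tmul (f : Module.End R M) (P : R[X]) (a : A) (m : M) :
    aeval (f.baseChange A) (P.map (algebraMap R A)) (a ⊗ₜ m) = a ⊗ₜ aeval f P m := by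
  rw [aeval_map_algebraMap, show f.baseChange A = Module.End.baseChangeHom R A M f from rfl,
    aeval_algHom_apply]
  rfl

theorem aeval_baseChange_one_tmul_eq_sum (f : Module.End R M) (Q : A[X]) (m : M) {n : ℕ}
    (hn : Q.natDegree < n) :
    aeval (f.baseChange A) Q (1 ⊗ₜ m) =
      ∑ i ∈ Finset.range n, Q.coeff i • (1 ⊗ₜ[R] (f ^ i) m) := by
  simp [aeval_eq_sum_range' hn, LinearMap.sum_apply, ← LinearMap.baseChange_pow]

theorem baseChange_apply_aeval_eq_smul_of_map_eq_mul {f : Module.End R M} {m : M} {P : R[X]}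
    (hPm : aeval f P m = 0) {a : A} {Q : A[X]} (hPQ : P.map (algebraMap R A) = (X - C a) * Q) :
    f.baseChange A (aeval (f.baseChange A) Q (1 ⊗ₜ m)) =
      a • aeval (f.baseChange A) Q (1 ⊗ₜ m) := by
  have h := aeval_baseChange_map_tmul f P (1 : A) m
  rw [hPm, TensorProduct.tmul_zero, hPQ, map_mul, Module.End.mul_apply, map_sub, aeval_X, aeval_C,
    LinearMap.sub_apply, Module.algebraMap_end_apply, sub_eq_zero] at h
  exact h

end

theorem eigenvector_with_algebraic_coefficients_general {E : Type*} [AddCommGroup E]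
    [Module ℚ E] (g : E →ₗ[ℚ] E) (d : ℕ) (lam : Fin (d + 1) → ℂ) (P : ℚ[X])
    (hP : P.map (algebraMap ℚ ℂ) = ∏ j : Fin (d + 1), (X - C (lam j)))
    (w : E)
    (hPw : (aeval (g : Module.End ℚ E) P) w = 0)
    (hmin : ∀ Q : ℚ[X], (aeval (g : Module.End ℚ E) Q) w = 0 → P ∣ Q) :
    ∃ μ : Fin (d + 1) → ℂ, μ 0 = 1 ∧ (∀ j, IsAlgebraic ℚ (μ j)) ∧
      ∀ z : ℂ ⊗[ℚ] E,
        z = (aeval (LinearMap.baseChange ℂ g)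
              (∏ j ∈ Finset.univ.erase (0 : Fin (d + 1)), (X - C (lam j))))
              ((1 : ℂ) ⊗ₜ[ℚ] w) →
        z ≠ 0 ∧ LinearMap.baseChange ℂ g z = lam 0 • z ∧
          z = ∑ j : Fin (d + 1), μ j • ((1 : ℂ) ⊗ₜ[ℚ] ((g ^ (d - (j : ℕ))) w)) := by
  set Q : ℂ[X] := ∏ j ∈ Finset.univ.erase (0 : Fin (d + 1)), (X - C (lam j))
  have hPQ : P.map (algebraMap ℚ ℂ) = (X - C (lam 0)) * Q := by
    rw [hP, ← Finset.mul_prod_erase _ _ (Finset.mem_univ (0 : Fin (d + 1)))]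
  have hPmonic : P.Monic := monic_of_injective (algebraMap ℚ ℂ).injective
    (hP ▸ monic_prod_of_monic _ _ fun j _ => monic_X_sub_C (lam j))
  have hQmonic : Q.Monic := monic_prod_of_monic _ _ fun j _ => monic_X_sub_C (lam j)
  have hQdeg : Q.natDegree = d := by
    simp [Q, natDegree_prod _ _ fun j _ => X_sub_C_ne_zero (lam j)]
  have hPdeg : P.natDegree = d + 1 := by
    rw [← natDegree_map_eq_of_injective (algebraMap ℚ ℂ).injective, hPQ,
      (monic_X_sub_C _).natDegree_mul hQmonic, hQdeg, natDegree_X_sub_C, add_comm]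
  have hQlead : Q.coeff d = 1 := hQdeg ▸ hQmonic.coeff_natDegree
  refine ⟨fun j => Q.coeff (d - j), by simpa using hQlead, fun j =>
    (isIntegral_coeff_of_dvd P Q hPmonic hQmonic (Dvd.intro_left _ hPQ.symm) _).isAlgebraic, ?_⟩
  rintro z rfl
  have hsum := aeval_baseChange_one_tmul_eq_sum g Q w (n := d + 1) (by omega)
  have hli : LinearIndependent ℂ fun i : Fin (d + 1) => (1 : ℂ) ⊗ₜ[ℚ] ((g ^ (i : ℕ)) w) :=
    (Module.Flat.linearIndependent_one_tmul (linearIndependent_pow_apply_of_forall_dvd hmin)).comp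
      (Fin.cast hPdeg.symm) (Fin.cast_injective _)
  refine ⟨fun hz => ?_, baseChange_apply_aeval_eq_smul_of_map_eq_mul hPw hPQ, ?_⟩
  · rw [hsum, ← Fin.sum_univ_eq_sum_range (fun i => Q.coeff i • (1 : ℂ) ⊗ₜ[ℚ] ((g ^ i) w))] at hz
    simpa [hQlead] using Fintype.linearIndependent_iff.1 hli _ hz (Fin.last d)
  · rw [hsum, ← Finset.sum_range_reflect, Fin.sum_univ_eq_sum_range
      (fun j => Q.coeff (d - j) • (1 : ℂ) ⊗ₜ[ℚ] ((g ^ (d - j)) w))]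
    simp only [add_tsub_cancel_right]

/-- Construction of an eigenvector with algebraic coefficients.  Let `g` be a
`ℚ`-linear endomorphism of a `ℚ`-vector space `E` and `w ≠ 0` a vector whose minimal
polynomial under `g` is the irreducible `P ∈ ℚ[X]`, with complex roots
`λ 0, λ 1, …, λ d` (so `deg P = d + 1`).  Then
`z := (ĝ − λ 1)⋯(ĝ − λ d) (1 ⊗ w)` in `ℂ ⊗_ℚ E` is a nonzero eigenvector of the
complexification `ĝ` with eigenvalue `λ 0`, and
`z = Σ_{j=0}^{d} μ_j (g^{d−j} w ⊗ 1)` where each `μ_j ∈ ℂ` is algebraic and `μ₀ = 1`. -/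
theorem eigenvector_with_algebraic_coefficients {E : Type*} [AddCommGroup E]
    [Module ℚ E] (g : E →ₗ[ℚ] E) (d : ℕ) (lam : Fin (d + 1) → ℂ) (P : ℚ[X])
    (hirr : Irreducible P)
    (hP : P.map (algebraMap ℚ ℂ) = ∏ j : Fin (d + 1), (X - C (lam j)))
    (w : E) (hw : w ≠ 0)
    (hPw : (aeval (g : Module.End ℚ E) P) w = 0)
    (hmin : ∀ Q : ℚ[X], (aeval (g : Module.End ℚ E) Q) w = 0 → P ∣ Q) :
    ∃ μ : Fin (d + 1) → ℂ, μ 0 = 1 ∧ (∀ j, IsAlgebraic ℚ (μ j)) ∧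
      ∀ z : ℂ ⊗[ℚ] E,
        z = (aeval (LinearMap.baseChange ℂ g)
              (∏ j ∈ Finset.univ.erase (0 : Fin (d + 1)), (X - C (lam j))))
              ((1 : ℂ) ⊗ₜ[ℚ] w) →
        z ≠ 0 ∧ LinearMap.baseChange ℂ g z = lam 0 • z ∧
          z = ∑ j : Fin (d + 1), μ j • ((1 : ℂ) ⊗ₜ[ℚ] ((g ^ (d - (j : ℕ))) w)) :=
  eigenvector_with_algebraic_coefficients_general g d lam P hP w hPw hmin
end
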